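/- The concatenation of t atomic saturable designs w¹,…,wᵗ for saturated structures S¹,…,Sᵗ, such that the first letters w^i_1 are pairwise distinct, is a design for the concatenated saturated structure S = S¹⋯Sᵗ. -/

import Mathlib

open scoped Classical

/-- An RNA nucleotide. -/
inductive Base | A | U | C | G
deriving DecidableEq, Inhabited, Repr

/-- The Watson-Crick pairing relation (only G-C and A-U pairs allowed). -/
def wcPair : Base → Base → Prop
  | .G, .C => True | .C, .G => True
  | .A, .U => True | .U, .A => True
  | _, _ => False

/-- The Nussinov-Jacobson pairing relation (G-C, A-U and G-U pairs allowed). -/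
def njPair : Base → Base → Prop
  | .G, .C => True | .C, .G => True
  | .A, .U => True | .U, .A => True
  | .G, .U => True | .U, .G => True
  | _, _ => False

/-- An RNA (pseudoknot-free) secondary structure, 0-indexed positions. -/
structure SecStr where
  len : ℕ
  pairs : Finset (ℕ × ℕ)
  lt : ∀ p ∈ pairs, p.1 < p.2
  ub : ∀ p ∈ pairs, p.2 < len
  once : ∀ p ∈ pairs, ∀ q ∈ pairs, p ≠ q →
    p.1 ≠ q.1 ∧ p.1 ≠ q.2 ∧ p.2 ≠ q.1 ∧ p.2 ≠ q.2
  noncross : ∀ p ∈ pairs, ∀ q ∈ pairs,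
    ¬ (p.1 < q.1 ∧ q.1 < p.2 ∧ p.2 < q.2)

def SecStr.pairedAt (S : SecStr) (i : ℕ) : Prop := ∃ p ∈ S.pairs, p.1 = i ∨ p.2 = i
def SecStr.unpairedAt (S : SecStr) (i : ℕ) : Prop := i < S.len ∧ ¬ S.pairedAt i
def SecStr.saturated (S : SecStr) : Prop := ∀ i < S.len, S.pairedAt i

/-- A structure is compatible with a sequence `w` (w.r.t. pairing relation `R`)
if it has the right length and all base pairs are `R`-valid. -/
def compat {α : Type*} [Inhabited α] (R : α → α → Prop) (w : List α) (S : SecStr) : Prop :=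
  S.len = w.length ∧ ∀ p ∈ S.pairs, R (w.getD p.1 default) (w.getD p.2 default)

/-- Base-pair-sum free energy of a structure on a sequence. -/
noncomputable def energy {α : Type*} [Inhabited α] (E : α → α → ℝ) (w : List α)
    (S : SecStr) : ℝ :=
  ∑ p ∈ S.pairs, E (w.getD p.1 default) (w.getD p.2 default)

/-- `w` is a Δ-design for `S`: `S` is compatible with `w`, and every other
compatible structure has energy at least `energy E w S + Δ`. -/
def isDesign {α : Type*} [Inhabited α] (R : α → α → Prop) (E : α → α → ℝ) (Δ : ℝ)
    (w : List α) (S : SecStr) : Prop :=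
  compat R w S ∧ ∀ S' : SecStr, compat R w S' → S' ≠ S →
    energy E w S' ≥ energy E w S + Δ

/- Tree representation machinery. -/
def encloses (q p : ℕ × ℕ) : Prop := q.1 < p.1 ∧ p.2 < q.2
def SecStr.hasParent (S : SecStr) (p : ℕ × ℕ) : Prop := ∃ q ∈ S.pairs, encloses q p
def SecStr.isParentOf (S : SecStr) (q p : ℕ × ℕ) : Prop :=
  q ∈ S.pairs ∧ p ∈ S.pairs ∧ encloses q p ∧ ¬ ∃ m ∈ S.pairs, encloses q m ∧ encloses m p

/-- Degree of a paired node: number of paired children plus one for the parent (if any). -/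
noncomputable def SecStr.pairDeg (S : SecStr) (p : ℕ × ℕ) : ℕ :=
  (S.pairs.filter (fun c => S.isParentOf p c)).card + (if S.hasParent p then 1 else 0)
/-- Degree of the virtual root: number of top-level base pairs. -/
noncomputable def SecStr.rootDeg (S : SecStr) : ℕ :=
  (S.pairs.filter (fun p => ¬ S.hasParent p)).card
/-- All nodes of the tree representation (including the virtual root) have degree ≤ d. -/
def SecStr.degLE (S : SecStr) (d : ℕ) : Prop :=
  S.rootDeg ≤ d ∧ ∀ p ∈ S.pairs, S.pairDeg p ≤ d

/-- A sequence is saturable if a saturated structure is compatible with it. -/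
def saturable {α : Type*} [Inhabited α] (R : α → α → Prop) (w : List α) : Prop :=
  ∃ S : SecStr, compat R w S ∧ S.saturated
/-- Atomic saturable: saturable, and no (nonempty) proper prefix is saturable. -/
def atomicSaturable {α : Type*} [Inhabited α] (R : α → α → Prop) (w : List α) : Prop :=
  saturable R w ∧ ∀ k, 0 < k → k < w.length → ¬ saturable R (w.take k)

/- Motifs. -/
def SecStr.unpChildOfPair (S : SecStr) (q : ℕ × ℕ) (u : ℕ) : Prop :=
  S.unpairedAt u ∧ q.1 < u ∧ u < q.2 ∧
    ¬ ∃ m ∈ S.pairs, q.1 < m.1 ∧ m.1 < u ∧ u < m.2 ∧ m.2 < q.2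
def SecStr.unpChildOfRoot (S : SecStr) (u : ℕ) : Prop :=
  S.unpairedAt u ∧ ¬ ∃ m ∈ S.pairs, m.1 < u ∧ u < m.2
/-- Motif m₅ : a tree node (possibly the root) of degree greater than four. -/
def hasM5 (S : SecStr) : Prop := 4 < S.rootDeg ∨ ∃ p ∈ S.pairs, 4 < S.pairDeg p
/-- Motif m₃∘ : a node with an unpaired child and degree greater than two. -/
def hasM3o (S : SecStr) : Prop :=
  (∃ q ∈ S.pairs, (∃ u, S.unpChildOfPair q u) ∧ 2 < S.pairDeg q) ∨
  ((∃ u, S.unpChildOfRoot u) ∧ 2 < S.rootDeg)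

/- Colorings of the tree representation. -/
inductive Col | black | white | gray
deriving DecidableEq

noncomputable def childCount (S : SecStr) (col : ℕ × ℕ → Col) (q : ℕ × ℕ) (c : Col) : ℕ :=
  (S.pairs.filter (fun p => S.isParentOf q p ∧ col p = c)).card
noncomputable def rootChildCount (S : SecStr) (col : ℕ × ℕ → Col) (c : Col) : ℕ :=
  (S.pairs.filter (fun p => ¬ S.hasParent p ∧ col p = c)).card

/-- A proper coloring of the tree representation. -/
def properCol (S : SecStr) (col : ℕ × ℕ → Col) : Prop :=
  rootChildCount S col .black ≤ 1 ∧ rootChildCount S col .white ≤ 1 ∧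
  rootChildCount S col .gray ≤ 2 ∧
  ∀ q ∈ S.pairs,
    childCount S col q .black ≤ 1 ∧ childCount S col q .white ≤ 1 ∧
    childCount S col q .gray ≤ 2 ∧
    childCount S col q (col q) ≤ 1 ∧
    (col q = .black → ∀ p ∈ S.pairs, S.isParentOf q p → col p ≠ .white) ∧
    (col q = .white → ∀ p ∈ S.pairs, S.isParentOf q p → col p ≠ .black)

/-- Level of a paired node: #black minus #white on the path to the root (incl. itself). -/
noncomputable def pairLvl (S : SecStr) (col : ℕ × ℕ → Col) (p : ℕ × ℕ) : ℤ :=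
  ((S.pairs.filter (fun q => q.1 ≤ p.1 ∧ p.2 ≤ q.2 ∧ col q = .black)).card : ℤ) -
  ((S.pairs.filter (fun q => q.1 ≤ p.1 ∧ p.2 ≤ q.2 ∧ col q = .white)).card : ℤ)
/-- Level of an unpaired node. -/
noncomputable def unpLvl (S : SecStr) (col : ℕ × ℕ → Col) (u : ℕ) : ℤ :=
  ((S.pairs.filter (fun q => q.1 < u ∧ u < q.2 ∧ col q = .black)).card : ℤ) -
  ((S.pairs.filter (fun q => q.1 < u ∧ u < q.2 ∧ col q = .white)).card : ℤ)

/-- Separated coloring: gray-node levels and unpaired-node levels are disjoint. -/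
def separatedCol (S : SecStr) (col : ℕ × ℕ → Col) : Prop :=
  ∀ p ∈ S.pairs, col p = .gray → ∀ u, S.unpairedAt u →
    pairLvl S col p ≠ unpLvl S col u

/-- A bipartite energy model: its compatibility graph is bipartite. -/
def Bipartite {α : Type*} (R : α → α → Prop) : Prop :=
  ∃ f : α → Bool, ∀ a b, R a b → f a ≠ f b

/-- The k-stutter of a sequence. -/
def stutterSeq {α : Type*} (w : List α) (k : ℕ) : List α :=
  w.flatMap (fun a => List.replicate k a)
/-- The base pairs of the k-stutter of a structure. -/
def stutterPairs (S : SecStr) (k : ℕ) : Finset (ℕ × ℕ) :=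
  S.pairs.biUnion (fun p => (Finset.range k).image
    (fun m => (k * p.1 + m, k * p.2 + (k - 1 - m))))

/-- Two base pairs belong to the same band (maximal stack) of S. -/
def sameBand (S : SecStr) (p p' : ℕ × ℕ) : Prop :=
  p ∈ S.pairs ∧ p' ∈ S.pairs ∧ p.1 + p.2 = p'.1 + p'.2 ∧
  ∀ x, min p.1 p'.1 ≤ x → x ≤ max p.1 p'.1 → (x, p.1 + p.2 - x) ∈ S.pairs

/-- Nussinov-Jacobson energies: a for G-C, b for A-U, g for G-U. -/
def njE (a b g : ℝ) : Base → Base → ℝ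
  | .G, .C => a | .C, .G => a
  | .A, .U => b | .U, .A => b
  | .G, .U => g | .U, .G => g
  | _, _ => 0

/-- level of position i : #G minus #C in the prefix of w ending at i. -/
def lvl (w : List Base) (i : ℕ) : ℤ :=
  ((w.take (i+1)).count Base.G : ℤ) - ((w.take (i+1)).count Base.C : ℤ)

/-!
Send `A, G` to the two generators of the free group on `Bool` and `U, C` to their inverses.
A word is saturable iff its image is trivial. Since every block `wⁱ` is trivial and atomic, a
saturable prefix of `W = w¹ ⋯ wᵗ` must end at a block boundary. In a saturated structure on `W`
the pair opened at position `0` therefore closes at the end of some block; the last letter of an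
atomic saturable word is the complement of its first, so distinct first letters force this to be
the first block. Hence the structure splits into saturated structures on the blocks, each unique
by the design property, so `SW` is the only saturated, i.e. maximum, structure on `W` and every
other compatible structure has at least one pair fewer.
-/

theorem List.getD_drop_take {α : Type*} (w : List α) (d : α) {a b k : ℕ} (h : k + a < b) :
    ((w.take b).drop a).getD k d = w.getD (k + a) d := by
  simp only [List.getD_eq_getElem?_getD, List.getElem?_drop, List.getElem?_take]
  rw [if_pos (by omega), Nat.add_comm]

theorem List.eq_getD_cons_append_getD_cons {α : Type*} (w : List α) (d : α) {j : ℕ}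
    (h0 : 0 < j) (hj : j < w.length) :
    w = w.getD 0 d :: (w.take j).drop 1 ++ w.getD j d :: w.drop (j + 1) := by
  obtain ⟨x, w', rfl⟩ := List.exists_cons_of_length_pos (by omega : 0 < w.length)
  obtain ⟨j, rfl⟩ := Nat.exists_eq_add_of_lt h0
  simp only [zero_add, List.getD_cons_zero, List.take_succ_cons, List.drop_succ_cons,
    List.drop_zero, List.getD_cons_succ, List.cons_append, List.cons.injEq, true_and]
  rw [List.length_cons, zero_add, Nat.add_lt_add_iff_right] at hj
  rw [List.getD_eq_getElem _ _ hj, List.getElem_cons_drop, List.take_append_drop]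

theorem List.getD_flatten_length_take_add {α : Type*} (l : List (List α)) (d : α) {i : ℕ}
    (hi : i < l.length) {k : ℕ} (hk : k < l[i].length) :
    l.flatten.getD ((l.take i).flatten.length + k) d = l[i].getD k d := by
  have hsplit : l.flatten = (l.take i).flatten ++ (l[i] ++ (l.drop (i + 1)).flatten) := by
    rw [← List.flatten_cons, ← List.drop_eq_getElem_cons hi, ← List.flatten_append,
      List.take_append_drop]
  rw [hsplit, List.getD_append_right _ _ _ _ (by omega), Nat.add_sub_cancel_left,
    List.getD_append _ _ _ _ hk]

theorem List.exists_length_take_flatten_le {α : Type*} (l : List (List α)) {x : ℕ}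
    (hx : x < l.flatten.length) : ∃ i, ∃ hi : i < l.length,
      (l.take i).flatten.length ≤ x ∧ x < (l.take i).flatten.length + l[i].length := by
  induction l generalizing x with
  | nil => simp at hx
  | cons u rest ih =>
  rw [List.flatten_cons, List.length_append] at hx
  by_cases hxu : x < u.length
  · exact ⟨0, by simp, by simp, by simpa using hxu⟩
  · obtain ⟨i, hi, h₁, h₂⟩ := ih (x := x - u.length) (by omega)
    refine ⟨i + 1, by simpa using hi, ?_, ?_⟩ <;>
      simp only [List.take_succ_cons, List.flatten_cons, List.length_append,
        List.getElem_cons_succ] <;> omega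

namespace SecStr

theorem ext {S T : SecStr} (hlen : S.len = T.len) (hpairs : S.pairs = T.pairs) : S = T := by
  cases S; cases T; simp_all

def support (S : SecStr) : Finset ℕ :=
  S.pairs.biUnion fun p => {p.1, p.2}

theorem mem_support {S : SecStr} {i : ℕ} : i ∈ S.support ↔ S.pairedAt i := by
  simp only [support, Finset.mem_biUnion, Finset.mem_insert, Finset.mem_singleton, pairedAt,
    eq_comm]

theorem card_support (S : SecStr) : S.support.card = 2 * S.pairs.card := by
  rw [support, Finset.card_biUnion, Finset.sum_congr rfl fun p hp =>
    Finset.card_pair (S.lt p hp).ne, Finset.sum_const, smul_eq_mul, mul_comm]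
  intro p hp q hq hpq
  have := S.once p hp q hq hpq
  simp only [Function.onFun, Finset.disjoint_insert_left, Finset.disjoint_insert_right,
    Finset.disjoint_singleton, Finset.mem_insert, Finset.mem_singleton]
  omega

theorem support_subset_range (S : SecStr) : S.support ⊆ Finset.range S.len := by
  intro i hi
  obtain ⟨p, hp, hip⟩ := mem_support.mp hi
  have := S.lt p hp; have := S.ub p hp
  rw [Finset.mem_range]; omega

theorem two_mul_card_pairs_le (S : SecStr) : 2 * S.pairs.card ≤ S.len := by
  simpa [card_support] using Finset.card_le_card S.support_subset_range

theorem saturated_iff_two_mul_card_pairs {S : SecStr} :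
    S.saturated ↔ 2 * S.pairs.card = S.len := by
  rw [← card_support, ← Finset.card_range S.len]
  constructor
  · intro h
    congr 1
    exact Finset.Subset.antisymm S.support_subset_range fun i hi =>
      mem_support.mpr (h i (Finset.mem_range.mp hi))
  · intro h i hi
    rw [← mem_support, Finset.eq_of_subset_of_card_le S.support_subset_range h.ge]
    exact Finset.mem_range.mpr hi

def slice (S : SecStr) (a b : ℕ) : SecStr where
  len := b - a
  pairs := (S.pairs.filter fun p => a ≤ p.1 ∧ p.2 < b).image fun p => (p.1 - a, p.2 - a)
  lt := by
    simp only [Finset.mem_image, Finset.mem_filter]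
    rintro _ ⟨p, ⟨hp, hpab⟩, rfl⟩
    have := S.lt p hp
    omega
  ub := by
    simp only [Finset.mem_image, Finset.mem_filter]
    rintro _ ⟨p, ⟨hp, hpab⟩, rfl⟩
    have := S.lt p hp
    omega
  once := by
    simp only [Finset.mem_image, Finset.mem_filter]
    rintro _ ⟨p, ⟨hp, hpab⟩, rfl⟩ _ ⟨q, ⟨hq, hqab⟩, rfl⟩ hne
    have := S.once p hp q hq (by rintro rfl; exact hne rfl)
    have := S.lt p hp; have := S.lt q hq
    omega
  noncross := by
    simp only [Finset.mem_image, Finset.mem_filter]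
    rintro _ ⟨p, ⟨hp, hpab⟩, rfl⟩ _ ⟨q, ⟨hq, hqab⟩, rfl⟩
    have := S.noncross p hp q hq
    have := S.lt p hp; have := S.lt q hq
    omega

@[simp] theorem slice_len (S : SecStr) (a b : ℕ) : (S.slice a b).len = b - a := rfl

theorem mem_slice_pairs {S : SecStr} {a b : ℕ} {q : ℕ × ℕ} :
    q ∈ (S.slice a b).pairs ↔ (q.1 + a, q.2 + a) ∈ S.pairs ∧ q.2 + a < b := by
  simp only [slice, Finset.mem_image, Finset.mem_filter]
  constructor
  · rintro ⟨p, ⟨hp, hpab⟩, rfl⟩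
    have := S.lt p hp
    refine ⟨?_, by omega⟩
    convert hp using 1
    ext <;> dsimp <;> omega
  · rintro ⟨hq, hqb⟩
    exact ⟨_, ⟨hq, by omega, hqb⟩, by simp⟩

theorem compat_slice {α : Type*} [Inhabited α] {R : α → α → Prop} {w : List α} {S : SecStr}
    (hS : compat R w S) {a b : ℕ} (hb : b ≤ S.len) :
    compat R ((w.take b).drop a) (S.slice a b) := by
  refine ⟨by simp [← hS.1, hb], fun q hq => ?_⟩
  have hlt := (S.slice a b).lt q hq
  obtain ⟨hq, hqb⟩ := mem_slice_pairs.mp hq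
  rw [List.getD_drop_take _ _ (by omega), List.getD_drop_take _ _ hqb]
  exact hS.2 _ hq

theorem saturated_slice {S : SecStr} (hS : S.saturated) {a b : ℕ} (hb : b ≤ S.len)
    (hclosed : ∀ p ∈ S.pairs, (a ≤ p.1 ∧ p.1 < b ↔ a ≤ p.2 ∧ p.2 < b)) :
    (S.slice a b).saturated := by
  intro i hi
  rw [slice_len] at hi
  obtain ⟨p, hp, hip⟩ := hS (i + a) (by omega)
  have := hclosed p hp
  have := S.lt p hp
  refine ⟨(p.1 - a, p.2 - a), mem_slice_pairs.mpr ⟨?_, by omega⟩, by dsimp; omega⟩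
  convert hp using 1
  ext <;> dsimp <;> omega

theorem exists_pair_zero {S : SecStr} (hS : S.saturated) (hlen : 0 < S.len) :
    ∃ j, (0, j) ∈ S.pairs := by
  obtain ⟨⟨a, j⟩, hp, h0⟩ := hS 0 hlen
  have := S.lt _ hp
  obtain rfl : a = 0 := by dsimp at h0 this; omega
  exact ⟨j, hp⟩

theorem eq_or_inside_or_after_of_pair_zero {S : SecStr} {j : ℕ} (hj : (0, j) ∈ S.pairs)
    {p : ℕ × ℕ} (hp : p ∈ S.pairs) : (p.1 = 0 ∧ p.2 = j) ∨ (0 < p.1 ∧ p.2 < j) ∨ j < p.1 := by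
  by_cases hpj : p = (0, j)
  · simp [hpj]
  have := S.once p hp _ hj hpj
  have := S.noncross _ hj p hp
  have := S.lt p hp
  dsimp at *
  omega

theorem saturable_take_of_pair_zero {α : Type*} [Inhabited α] {R : α → α → Prop}
    {w : List α} {S : SecStr} (hc : compat R w S) (hS : S.saturated) {j : ℕ}
    (hj : (0, j) ∈ S.pairs) : saturable R (w.take (j + 1)) := by
  have hjS := S.ub _ hj
  refine ⟨S.slice 0 (j + 1), compat_slice hc hjS, saturated_slice hS hjS ?_⟩
  intro p hp
  have := S.eq_or_inside_or_after_of_pair_zero hj hp; have := S.lt p hp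
  omega

theorem eq_of_slice_eq {S T : SecStr} {n : ℕ} (hS : ∀ p ∈ S.pairs, p.2 < n ∨ n ≤ p.1)
    (hT : ∀ p ∈ T.pairs, p.2 < n ∨ n ≤ p.1) (hlen : S.len = T.len)
    (hleft : S.slice 0 n = T.slice 0 n) (hright : S.slice n S.len = T.slice n T.len) :
    S = T := by
  suffices key : ∀ S T : SecStr, (∀ p ∈ S.pairs, p.2 < n ∨ n ≤ p.1) →
      S.slice 0 n = T.slice 0 n → S.slice n S.len = T.slice n T.len → S.pairs ⊆ T.pairs from
    ext hlen (Finset.Subset.antisymm (key S T hS hleft hright)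
      (key T S hT hleft.symm hright.symm))
  intro S T hS hleft hright p hp
  have := S.lt p hp; have := S.ub p hp
  rcases hS p hp with h | h
  · have hq : p ∈ (S.slice 0 n).pairs := mem_slice_pairs.mpr ⟨by simpa using hp, by omega⟩
    rw [hleft] at hq
    simpa using (mem_slice_pairs.mp hq).1
  · have hq : (p.1 - n, p.2 - n) ∈ (S.slice n S.len).pairs :=
      mem_slice_pairs.mpr ⟨by convert hp using 1; ext <;> dsimp <;> omega, by dsimp; omega⟩
    rw [hright] at hq
    convert (mem_slice_pairs.mp hq).1 using 1
    ext <;> dsimp <;> omega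

def insertAdjacent (S : SecStr) (i : ℕ) (hi : i ≤ S.len) : SecStr where
  len := S.len + 2
  pairs := insert (i, i + 1)
    (S.pairs.image fun p => (if p.1 < i then p.1 else p.1 + 2, if p.2 < i then p.2 else p.2 + 2))
  lt := by
    simp only [Finset.mem_insert, Finset.mem_image]
    rintro _ (rfl | ⟨p, hp, rfl⟩)
    · exact Nat.lt_succ_self i
    · have := S.lt p hp
      dsimp; split_ifs <;> omega
  ub := by
    simp only [Finset.mem_insert, Finset.mem_image]
    rintro _ (rfl | ⟨p, hp, rfl⟩)
    · dsimp; omega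
    · have := S.ub p hp
      dsimp; split_ifs <;> omega
  once := by
    simp only [Finset.mem_insert, Finset.mem_image]
    rintro _ (rfl | ⟨p, hp, rfl⟩) _ (rfl | ⟨q, hq, rfl⟩) hne
    · exact absurd rfl hne
    · dsimp; split_ifs <;> omega
    · dsimp; split_ifs <;> omega
    · have := S.once p hp q hq (by rintro rfl; exact hne rfl)
      dsimp; split_ifs <;> omega
  noncross := by
    simp only [Finset.mem_insert, Finset.mem_image]
    rintro _ (rfl | ⟨p, hp, rfl⟩) _ (rfl | ⟨q, hq, rfl⟩)
    · omega
    · dsimp; split_ifs <;> omega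
    · dsimp; split_ifs <;> omega
    · have := S.noncross p hp q hq
      have := S.lt p hp; have := S.lt q hq
      dsimp; split_ifs <;> omega

theorem compat_insertAdjacent {α : Type*} [Inhabited α] {R : α → α → Prop} {u v : List α}
    {x y : α} {S : SecStr} (hS : compat R (u ++ v) S) (hxy : R x y) :
    compat R (u ++ x :: y :: v) (S.insertAdjacent u.length (by simp [hS.1])) := by
  refine ⟨by simp [insertAdjacent, hS.1]; omega, ?_⟩
  simp only [insertAdjacent, Finset.mem_insert, Finset.mem_image]
  have shift : ∀ k, k < (u ++ v).length →
      (u ++ x :: y :: v).getD (if k < u.length then k else k + 2) default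
        = (u ++ v).getD k default := by
    intro k hk
    split_ifs with hku
    · rw [List.getD_append _ _ _ _ hku, List.getD_append _ _ _ _ hku]
    · rw [List.getD_append_right _ _ _ _ (by omega), List.getD_append_right _ _ _ _ (by omega),
        show k + 2 - u.length = (k - u.length) + 2 by omega]
      rfl
  rintro _ (rfl | ⟨p, hp, rfl⟩)
  · simpa [List.getD_append_right] using hxy
  · have := S.lt p hp; have := S.ub p hp
    rw [hS.1] at this
    rw [shift _ (by omega), shift _ (by omega)]
    exact hS.2 p hp

theorem saturated_insertAdjacent {S : SecStr} (hS : S.saturated) {i : ℕ} (hi : i ≤ S.len) :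
    (S.insertAdjacent i hi).saturated := by
  intro k hk
  simp only [insertAdjacent] at hk
  by_cases hki : k = i ∨ k = i + 1
  · exact ⟨(i, i + 1), Finset.mem_insert_self _ _, by omega⟩
  obtain ⟨p, hp, hpk⟩ := hS (if k < i then k else k - 2) (by split_ifs <;> omega)
  refine ⟨_, Finset.mem_insert_of_mem (Finset.mem_image_of_mem _ hp), ?_⟩
  dsimp; split_ifs at hpk ⊢ <;> omega

end SecStr

def saturatedStructures {α : Type*} [Inhabited α] (R : α → α → Prop) (w : List α) :
    Set SecStr :=
  {S | compat R w S ∧ S.saturated}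

theorem split_of_pair_zero_mem {α : Type*} [Inhabited α] {R : α → α → Prop} {u v : List α}
    (hu : u ≠ []) {S : SecStr} (hS : S ∈ saturatedStructures R (u ++ v))
    (hj : (0, u.length - 1) ∈ S.pairs) :
    (∀ p ∈ S.pairs, p.2 < u.length ∨ u.length ≤ p.1) ∧
      S.slice 0 u.length ∈ saturatedStructures R u ∧
      S.slice u.length S.len ∈ saturatedStructures R v := by
  obtain ⟨hc, hS⟩ := hS
  have hlen := hc.1
  rw [List.length_append] at hlen
  have nest := fun p (hp : p ∈ S.pairs) => S.eq_or_inside_or_after_of_pair_zero hj hp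
  have hu := List.length_pos_iff.mpr hu
  refine ⟨fun p hp => by have := nest p hp; omega, ⟨?_, ?_⟩, ⟨?_, ?_⟩⟩
  · simpa using SecStr.compat_slice hc (a := 0) (b := u.length) (by omega)
  · refine SecStr.saturated_slice hS (by omega) fun p hp => ?_
    have := nest p hp; have := S.lt p hp
    omega
  · have := SecStr.compat_slice hc (a := u.length) le_rfl
    rwa [List.take_of_length_le hc.1.ge, List.drop_left] at this
  · refine SecStr.saturated_slice hS le_rfl fun p hp => ?_
    have := nest p hp; have := S.lt p hp; have := S.ub p hp
    omega

def wcComp : Base → Base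
  | .A => .U | .U => .A | .G => .C | .C => .G

theorem wcPair_iff_eq_wcComp {x y : Base} : wcPair x y ↔ y = wcComp x := by
  cases x <;> cases y <;> simp [wcPair, wcComp]

theorem wcComp_injective : Function.Injective wcComp := by
  intro x y; cases x <;> cases y <;> simp [wcComp]

def Base.toLetter : Base → Bool × Bool
  | .A => (false, true) | .U => (false, false) | .G => (true, true) | .C => (true, false)

theorem wcPair_iff_toLetter {x y : Base} :
    wcPair x y ↔ y.toLetter = (x.toLetter.1, !x.toLetter.2) := by
  cases x <;> cases y <;> simp [wcPair, Base.toLetter]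

def toFreeGroup (w : List Base) : FreeGroup Bool := FreeGroup.mk (w.map Base.toLetter)

@[simp] theorem toFreeGroup_append (u v : List Base) :
    toFreeGroup (u ++ v) = toFreeGroup u * toFreeGroup v := by
  simp [toFreeGroup, FreeGroup.mul_mk]

theorem toFreeGroup_pair {x y : Base} (h : wcPair x y) : toFreeGroup [x, y] = 1 := by
  rw [wcPair_iff_toLetter] at h
  show FreeGroup.mk [x.toLetter, y.toLetter] = FreeGroup.mk []
  rw [h]
  exact Quot.sound (FreeGroup.Red.Step.not (L₁ := []) (L₂ := []))

theorem toFreeGroup_cons_append_cons {x y : Base} {u v : List Base} (hxy : wcPair x y)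
    (hu : toFreeGroup u = 1) (hv : toFreeGroup v = 1) : toFreeGroup (x :: u ++ y :: v) = 1 := by
  rw [show x :: u ++ y :: v = [x] ++ u ++ [y] ++ v by simp, toFreeGroup_append,
    toFreeGroup_append, toFreeGroup_append, hu, hv, mul_one, mul_one, ← toFreeGroup_append]
  exact toFreeGroup_pair hxy

theorem FreeGroup.Red.Step.exists_eq_append {α : Type*} {L M : List (α × Bool)}
    (h : FreeGroup.Red.Step L M) : ∃ L₁ L₂ a b, L = L₁ ++ (a, b) :: (a, !b) :: L₂ := by
  cases h
  exact ⟨_, _, _, _, rfl⟩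

theorem exists_wcPair_adjacent {w : List Base} (h : toFreeGroup w = 1) (hne : w ≠ []) :
    ∃ u x y v, w = u ++ x :: y :: v ∧ wcPair x y := by
  obtain ⟨c, hred, hnil⟩ := FreeGroup.Red.exact.mp h
  rw [FreeGroup.Red.nil_iff] at hnil
  subst hnil
  obtain heq | ⟨M, hstep, -⟩ := Relation.ReflTransGen.cases_head hred
  · exact absurd (List.map_eq_nil_iff.mp heq) hne
  obtain ⟨L₁, L₂, a, b, hL⟩ := hstep.exists_eq_append
  obtain ⟨u, _, rfl, -, hrest⟩ := List.map_eq_append_iff.mp hL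
  obtain ⟨x, _, rfl, hx, hrest⟩ := List.map_eq_cons_iff.mp hrest
  obtain ⟨y, v, rfl, hy, -⟩ := List.map_eq_cons_iff.mp hrest
  exact ⟨u, x, y, v, rfl, wcPair_iff_toLetter.mpr (by rw [hx, hy])⟩

theorem toFreeGroup_eq_one_of_saturated {w : List Base} {S : SecStr} (hc : compat wcPair w S)
    (hS : S.saturated) : toFreeGroup w = 1 := by
  induction hn : w.length using Nat.strong_induction_on generalizing w S with
  | _ n ih =>
  rcases eq_or_ne w [] with rfl | hw
  · rfl
  obtain ⟨j, hj⟩ := S.exists_pair_zero hS (by rw [hc.1]; exact List.length_pos_iff.mpr hw)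
  have hlen := hc.1
  have hjw : j < w.length := hlen ▸ S.ub _ hj
  have hj0 : 0 < j := S.lt _ hj
  have nest := fun p (hp : p ∈ S.pairs) => S.eq_or_inside_or_after_of_pair_zero hj hp
  have hinner : toFreeGroup ((w.take j).drop 1) = 1 := by
    refine ih _ (by simp only [List.length_drop, List.length_take]; omega)
      (SecStr.compat_slice hc (by omega))
      (SecStr.saturated_slice hS (by omega) fun p hp => ?_) rfl
    have := nest p hp; have := S.lt p hp
    omega
  have hrest : toFreeGroup ((w.take S.len).drop (j + 1)) = 1 := by
    refine ih _ (by simp only [List.length_drop, List.length_take]; omega)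
      (SecStr.compat_slice hc le_rfl)
      (SecStr.saturated_slice hS le_rfl fun p hp => ?_) rfl
    have := nest p hp; have := S.lt p hp; have := S.ub p hp
    omega
  rw [hlen, List.take_length] at hrest
  rw [w.eq_getD_cons_append_getD_cons default hj0 hjw]
  exact toFreeGroup_cons_append_cons (hc.2 _ hj) hinner hrest

theorem saturable_of_toFreeGroup_eq_one {w : List Base} (h : toFreeGroup w = 1) :
    saturable wcPair w := by
  induction hn : w.length using Nat.strong_induction_on generalizing w with
  | _ n ih =>
  rcases eq_or_ne w [] with rfl | hw
  · exact ⟨⟨0, ∅, by simp, by simp, by simp, by simp⟩, ⟨rfl, by simp⟩,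
      fun i hi => absurd hi (Nat.not_lt_zero i)⟩
  obtain ⟨u, x, y, v, rfl, hxy⟩ := exists_wcPair_adjacent h hw
  have huv : toFreeGroup (u ++ v) = 1 := by
    rwa [show u ++ x :: y :: v = u ++ [x, y] ++ v by simp, toFreeGroup_append,
      toFreeGroup_append, toFreeGroup_pair hxy, mul_one, ← toFreeGroup_append] at h
  obtain ⟨S, hc, hS⟩ := ih _ (by simp [← hn]) huv rfl
  exact ⟨_, SecStr.compat_insertAdjacent hc hxy, SecStr.saturated_insertAdjacent hS _⟩

theorem saturable_iff_toFreeGroup_eq_one {w : List Base} :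
    saturable wcPair w ↔ toFreeGroup w = 1 :=
  ⟨fun ⟨_, hc, hS⟩ => toFreeGroup_eq_one_of_saturated hc hS, saturable_of_toFreeGroup_eq_one⟩

theorem getD_length_sub_one_eq_wcComp_headI {u : List Base} (ha : atomicSaturable wcPair u)
    (hu : u ≠ []) : u.getD (u.length - 1) default = wcComp u.headI := by
  obtain ⟨⟨S, hc, hS⟩, hmin⟩ := ha
  obtain ⟨j, hj⟩ := S.exists_pair_zero hS (by rw [hc.1]; exact List.length_pos_iff.mpr hu)
  have hju : j < u.length := hc.1 ▸ S.ub _ hj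
  obtain rfl : j = u.length - 1 := by
    by_contra hne
    exact hmin (j + 1) (by omega) (by omega) (S.saturable_take_of_pair_zero hc hS hj)
  rw [← wcPair_iff_eq_wcComp]
  obtain ⟨x, u, rfl⟩ := List.exists_cons_of_ne_nil hu
  exact hc.2 _ hj

theorem exists_eq_append_of_saturable_take (l : List (List Base))
    (hat : ∀ u ∈ l, atomicSaturable wcPair u) {m : ℕ} (hm : 0 < m) (hml : m ≤ l.flatten.length)
    (h : saturable wcPair (l.flatten.take m)) :
    ∃ l₁ v l₂, l = l₁ ++ v :: l₂ ∧ m = l₁.flatten.length + v.length := by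
  induction l generalizing m with
  | nil => rw [List.flatten_nil, List.length_nil] at hml; omega
  | cons u rest ih =>
  have hu := hat u List.mem_cons_self
  rw [List.flatten_cons] at hml h
  rcases lt_trichotomy m u.length with hlt | rfl | hgt
  · rw [List.take_append_of_le_length hlt.le] at h
    exact absurd h (hu.2 m hm hlt)
  · exact ⟨[], u, rest, rfl, by simp⟩
  · rw [List.take_append, List.take_of_length_le hgt.le, saturable_iff_toFreeGroup_eq_one,
      toFreeGroup_append, saturable_iff_toFreeGroup_eq_one.mp hu.1, one_mul,
      ← saturable_iff_toFreeGroup_eq_one] at h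
    obtain ⟨l₁, v, l₂, rfl, hm'⟩ := ih (fun v hv => hat v (List.mem_cons_of_mem u hv))
      (by omega) (by rw [List.length_append] at hml; omega) h
    exact ⟨u :: l₁, v, l₂, rfl, by simp only [List.flatten_cons, List.length_append]; omega⟩

theorem pair_zero_mem_of_saturated_append_flatten {u : List Base} {rest : List (List Base)}
    (hat : ∀ v ∈ u :: rest, atomicSaturable wcPair v) (hne : ∀ v ∈ u :: rest, v ≠ [])
    (hhead : ∀ v ∈ rest, u.headI ≠ v.headI) {S : SecStr}
    (hS : S ∈ saturatedStructures wcPair (u ++ rest.flatten)) :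
    (0, u.length - 1) ∈ S.pairs := by
  obtain ⟨hc, hS⟩ := hS
  have hu := hne u List.mem_cons_self
  have hlen := hc.1
  rw [List.length_append] at hlen
  obtain ⟨j, hj⟩ := S.exists_pair_zero hS (by have := List.length_pos_iff.mpr hu; omega)
  have hjW := S.ub _ hj
  obtain ⟨l₁, v, l₂, hsplit, hjv⟩ := exists_eq_append_of_saturable_take (u :: rest) hat
    (m := j + 1) (by omega) (by simp only [List.flatten_cons, List.length_append]; omega)
    (S.saturable_take_of_pair_zero hc hS hj)
  rcases l₁ with _ | ⟨u', l₁⟩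
  · obtain ⟨rfl, -⟩ := List.cons.inj hsplit
    convert hj
    simp only [List.flatten_nil, List.length_nil, zero_add] at hjv
    omega
  · exfalso
    simp only [List.cons_append, List.cons.injEq] at hsplit
    obtain ⟨rfl, rfl⟩ := hsplit
    have hv := List.length_pos_iff.mpr (hne v (by simp))
    apply hhead v (by simp)
    have hfirst : (u ++ (l₁ ++ v :: l₂).flatten).getD 0 default = u.headI := by
      obtain ⟨x, u, rfl⟩ := List.exists_cons_of_ne_nil (hne u List.mem_cons_self)
      rfl
    have hlast : (u ++ (l₁ ++ v :: l₂).flatten).getD j default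
        = v.getD (v.length - 1) default := by
      simp only [List.flatten_cons, List.length_append] at hjv
      rw [List.flatten_append, List.flatten_cons, ← List.append_assoc, ← List.append_assoc,
        List.getD_append _ _ _ _ (by simp only [List.length_append]; omega),
        List.getD_append_right _ _ _ _ (by simp only [List.length_append]; omega)]
      congr 1
      simp only [List.length_append]
      omega
    apply wcComp_injective
    rw [← getD_length_sub_one_eq_wcComp_headI (hat v (by simp)) (hne v (by simp)), ← hlast,
      ← hfirst]
    exact (wcPair_iff_eq_wcComp.mp (hc.2 _ hj)).symm

theorem subsingleton_saturatedStructures_flatten (l : List (List Base))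
    (hat : ∀ u ∈ l, atomicSaturable wcPair u) (hne : ∀ u ∈ l, u ≠ [])
    (hhead : l.Pairwise fun u v => u.headI ≠ v.headI)
    (huniq : ∀ u ∈ l, (saturatedStructures wcPair u).Subsingleton) :
    (saturatedStructures wcPair l.flatten).Subsingleton := by
  induction l with
  | nil =>
    rintro S ⟨⟨hS, -⟩, -⟩ T ⟨⟨hT, -⟩, -⟩
    simp only [List.flatten_nil, List.length_nil] at hS hT
    have empty (R : SecStr) (hR : R.len = 0) : R.pairs = ∅ :=
      Finset.eq_empty_of_forall_notMem fun p hp => by have := R.ub p hp; omega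
    exact SecStr.ext (hS.trans hT.symm) (by rw [empty S hS, empty T hT])
  | cons u rest ih =>
  rw [List.pairwise_cons] at hhead
  rw [List.flatten_cons]
  have halves S (hS : S ∈ saturatedStructures wcPair (u ++ rest.flatten)) :=
    split_of_pair_zero_mem (hne u List.mem_cons_self) hS
      (pair_zero_mem_of_saturated_append_flatten hat hne hhead.1 hS)
  intro S hS T hT
  obtain ⟨hSn, hSl, hSr⟩ := halves S hS
  obtain ⟨hTn, hTl, hTr⟩ := halves T hT
  exact SecStr.eq_of_slice_eq hSn hTn (by rw [hS.1.1, hT.1.1])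
    (huniq u List.mem_cons_self hSl hTl)
    (ih (fun v hv => hat v (.tail u hv)) (fun v hv => hne v (.tail u hv)) hhead.2
      (fun v hv => huniq v (.tail u hv)) hSr hTr)

theorem energy_const {α : Type*} [Inhabited α] (c : ℝ) (w : List α) (S : SecStr) :
    energy (fun _ _ => c) w S = c * S.pairs.card := by
  simp [energy, mul_comm]

section Design

variable {α : Type*} [Inhabited α] {R : α → α → Prop} {c Δ : ℝ} {w : List α} {S : SecStr}

theorem eq_of_isDesign_of_mem_saturatedStructures (hd : isDesign R (fun _ _ => c) Δ w S)
    (hc : c ≤ 0) (hΔ : 0 < Δ) {S' : SecStr} (hS' : S' ∈ saturatedStructures R w) : S' = S := by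
  by_contra hne
  have henergy := hd.2 S' hS'.1 hne
  have hcard : S.pairs.card ≤ S'.pairs.card := by
    have := S.two_mul_card_pairs_le
    have := SecStr.saturated_iff_two_mul_card_pairs.mp hS'.2
    have := hd.1.1; have := hS'.1.1
    omega
  have := mul_le_mul_of_nonpos_left (Nat.cast_le.mpr hcard : (S.pairs.card : ℝ) ≤ _) hc
  rw [energy_const, energy_const] at henergy
  linarith

theorem subsingleton_saturatedStructures_of_isDesign (hd : isDesign R (fun _ _ => c) Δ w S)
    (hc : c ≤ 0) (hΔ : 0 < Δ) : (saturatedStructures R w).Subsingleton :=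
  fun _ h₁ _ h₂ => (eq_of_isDesign_of_mem_saturatedStructures hd hc hΔ h₁).trans
    (eq_of_isDesign_of_mem_saturatedStructures hd hc hΔ h₂).symm

theorem isDesign_of_subsingleton_saturatedStructures (hS : S ∈ saturatedStructures R w)
    (huniq : (saturatedStructures R w).Subsingleton) (hc : c ≤ 0) (hΔ : Δ ≤ -c) :
    isDesign R (fun _ _ => c) Δ w S := by
  refine ⟨hS.1, fun S' hS'c hne => ?_⟩
  have hunsat : ¬ S'.saturated := fun h => hne (huniq ⟨hS'c, h⟩ hS)
  have hcard : S'.pairs.card + 1 ≤ S.pairs.card := by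
    rw [SecStr.saturated_iff_two_mul_card_pairs] at hunsat
    have := S'.two_mul_card_pairs_le
    have := SecStr.saturated_iff_two_mul_card_pairs.mp hS.2
    have := hS.1.1; have := hS'c.1
    omega
  have hcard' : (S'.pairs.card : ℝ) + 1 ≤ S.pairs.card := by exact_mod_cast hcard
  have := mul_le_mul_of_nonpos_left hcard' hc
  rw [energy_const, energy_const]
  linarith

end Design

section Blocks

variable {α : Type*} {t : ℕ} (ws : Fin t → List α)

def blockOffset (i : Fin t) : ℕ := ∑ j ∈ Finset.univ.filter (· < i), (ws j).length

theorem blockOffset_eq_length_flatten_take (i : Fin t) :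
    blockOffset ws i = ((List.ofFn ws).take i).flatten.length := by
  rw [blockOffset, List.length_flatten, List.map_take, List.map_ofFn, List.sum_take_ofFn]
  exact Finset.sum_congr (by ext; simp only [Finset.mem_filter, Finset.mem_univ, true_and]; rfl)
    fun _ _ => rfl

theorem getD_flatten_ofFn_blockOffset_add (d : α) (i : Fin t) {k : ℕ}
    (hk : k < (ws i).length) :
    (List.ofFn ws).flatten.getD (blockOffset ws i + k) d = (ws i).getD k d := by
  rw [blockOffset_eq_length_flatten_take]
  simpa using
    List.getD_flatten_length_take_add (List.ofFn ws) d (i := i) (by simp) (by simpa using hk)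

theorem exists_blockOffset_le {x : ℕ} (hx : x < (List.ofFn ws).flatten.length) :
    ∃ i, blockOffset ws i ≤ x ∧ x < blockOffset ws i + (ws i).length := by
  obtain ⟨i, hi, h⟩ := List.exists_length_take_flatten_le _ hx
  rw [List.length_ofFn] at hi
  refine ⟨⟨i, hi⟩, ?_⟩
  simpa [blockOffset_eq_length_flatten_take] using h

variable {Ss : Fin t → SecStr} {SW : SecStr}

theorem compat_of_blocks [Inhabited α] {R : α → α → Prop} (hc : ∀ i, compat R (ws i) (Ss i))
    (hlen : SW.len = (List.ofFn ws).flatten.length)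
    (hpairs : SW.pairs = Finset.univ.biUnion fun i =>
      (Ss i).pairs.image fun p => (p.1 + blockOffset ws i, p.2 + blockOffset ws i)) :
    compat R (List.ofFn ws).flatten SW := by
  refine ⟨hlen, fun q hq => ?_⟩
  simp only [hpairs, Finset.mem_biUnion, Finset.mem_image] at hq
  obtain ⟨i, -, p, hp, rfl⟩ := hq
  have := (Ss i).lt p hp; have := (Ss i).ub p hp
  rw [(hc i).1] at this
  rw [add_comm p.1, add_comm p.2, getD_flatten_ofFn_blockOffset_add _ _ _ (by omega),
    getD_flatten_ofFn_blockOffset_add _ _ _ (by omega)]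
  exact (hc i).2 p hp

theorem saturated_of_blocks (hlen' : ∀ i, (Ss i).len = (ws i).length)
    (hsat : ∀ i, (Ss i).saturated) (hlen : SW.len = (List.ofFn ws).flatten.length)
    (hpairs : SW.pairs = Finset.univ.biUnion fun i =>
      (Ss i).pairs.image fun p => (p.1 + blockOffset ws i, p.2 + blockOffset ws i)) :
    SW.saturated := by
  intro x hx
  obtain ⟨i, h₁, h₂⟩ := exists_blockOffset_le ws (hlen ▸ hx)
  obtain ⟨p, hp, hpx⟩ := hsat i (x - blockOffset ws i) (by rw [hlen']; omega)
  refine ⟨(p.1 + blockOffset ws i, p.2 + blockOffset ws i), ?_, by dsimp; omega⟩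
  rw [hpairs]
  exact Finset.mem_biUnion.mpr ⟨i, Finset.mem_univ i, Finset.mem_image_of_mem _ hp⟩

end Blocks

/-- the concatenation of t atomic saturable designs with pairwise
distinct first letters is a design for the concatenated saturated structure. -/
theorem stmt6 (t : ℕ) (ws : Fin t → List Base) (Ss : Fin t → SecStr)
    (hdes : ∀ i, isDesign wcPair (fun _ _ => (-1 : ℝ)) 1 (ws i) (Ss i))
    (hatom : ∀ i, atomicSaturable wcPair (ws i))
    (hsat : ∀ i, (Ss i).saturated)
    (hne : ∀ i, ws i ≠ [])
    (hdist : ∀ i j, i ≠ j → (ws i).headI ≠ (ws j).headI)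
    (W : List Base) (hW : W = (List.ofFn ws).flatten)
    (off : Fin t → ℕ)
    (hoff : ∀ i, off i = ∑ j ∈ Finset.univ.filter (· < i), (ws j).length)
    (SW : SecStr) (hlen : SW.len = W.length)
    (hpairs : SW.pairs = Finset.univ.biUnion
      (fun i => (Ss i).pairs.image (fun p => (p.1 + off i, p.2 + off i)))) :
    isDesign wcPair (fun _ _ => (-1 : ℝ)) 1 W SW := by
  obtain rfl : off = blockOffset ws := funext hoff
  subst hW
  have hc i := (hdes i).1
  refine isDesign_of_subsingleton_saturatedStructures
    ⟨compat_of_blocks ws hc hlen hpairs,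
      saturated_of_blocks ws (fun i => (hc i).1) hsat hlen hpairs⟩ ?_ (by norm_num) (by norm_num)
  refine subsingleton_saturatedStructures_flatten _ (List.forall_mem_ofFn_iff.mpr hatom)
    (List.forall_mem_ofFn_iff.mpr hne) (List.pairwise_ofFn.mpr fun i j hij => hdist i j hij.ne)
    (List.forall_mem_ofFn_iff.mpr fun i => ?_)
  exact subsingleton_saturatedStructures_of_isDesign (hdes i) (by norm_num) (by norm_num)
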